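/- Let X_1, X_2, ... be i.i.d. with P(X_j = k) = 2^{-k-2} for integer k ≥ -1. For every fixed R ≥ 1 and all a_1,...,a_R ∈ {-1,0,1,...}, the conditional probability P(X_1=a_1,...,X_R=a_R | X_1+...+X_n = 0) converges, as n → ∞, to P(X_1=a_1,...,X_R=a_R). -/

import Mathlib

/-!
Each `X_j + 1` is geometric with parameter `1/2`, so `S_n = X_1 + ... + X_n` has the explicit law
`P(S_n = j - n) = (n multichoose j) 2^-(j+n)`. By independence of disjoint blocks, conditioning on
`S_n = 0` multiplies `P(X_1 = a_1, ..., X_R = a_R)` by `P(S_{n-R} = -∑ a_i) / P(S_n = 0)`. This is a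
ratio of multichoose coefficients near the diagonal times a power of `2`, and it tends to `1`:
moving either index of `n multichoose n` down by one multiplies it by a factor tending to `1/2`.
-/

open MeasureTheory ProbabilityTheory Filter Topology Finset
open scoped ENNReal

namespace Nat

theorem multichoose_mul_add (n k : ℕ) : n.multichoose k * (n + k) = (n + 1).multichoose k * n := by
  cases n with
  | zero => cases k <;> simp
  | succ n =>
    rw [multichoose_eq, multichoose_eq, show n + 1 + k - 1 = n + k by omega,
      show n + 1 + 1 + k - 1 = n + k + 1 by omega, show n + 1 + k = n + k + 1 by omega,
      choose_mul_succ_eq, show n + k + 1 - k = n + 1 by omega]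

theorem multichoose_succ_mul_succ (n k : ℕ) :
    n.multichoose (k + 1) * (k + 1) = n.multichoose k * (n + k) := by
  cases n with
  | zero => cases k <;> simp
  | succ n =>
    rw [multichoose_eq, multichoose_eq, show n + 1 + (k + 1) - 1 = n + k + 1 by omega,
      show n + 1 + k - 1 = n + k by omega, ← add_one_mul_choose_eq]
    ring

theorem multichoose_self_pos (n : ℕ) : 0 < n.multichoose n := by
  rw [multichoose_eq]; exact choose_pos (by omega)

theorem sum_range_multichoose_eq_multichoose_succ (n N : ℕ) :
    ∑ i ∈ range (N + 1), n.multichoose i = (n + 1).multichoose N := by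
  rw [sum_range_multichoose, multichoose_eq, show n + 1 + N - 1 = N + n by omega,
    choose_symm_add]

end Nat

theorem tendsto_natSub_div_two_mul_natSub (u v : ℕ) :
    Tendsto (fun n : ℕ => ((n - u : ℕ) : ℝ) / ((2 * n - v : ℕ) : ℝ)) atTop (𝓝 2⁻¹) := by
  have hinv := tendsto_inv_atTop_nhds_zero_nat (𝕜 := ℝ)
  have h : Tendsto (fun n : ℕ => (1 - u * (n : ℝ)⁻¹) / (2 - v * (n : ℝ)⁻¹)) atTop
      (𝓝 ((1 - u * 0) / (2 - v * 0))) :=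
    (tendsto_const_nhds.sub (hinv.const_mul _)).div (tendsto_const_nhds.sub (hinv.const_mul _))
      (by norm_num)
  rw [mul_zero, mul_zero, sub_zero, sub_zero, one_div] at h
  refine h.congr' ?_
  filter_upwards [eventually_gt_atTop (u + v)] with n hn
  have hn0 : (n : ℝ) ≠ 0 := Nat.cast_ne_zero.2 (by omega)
  have hv : (2 * n - v : ℝ) ≠ 0 := by
    rw [sub_ne_zero]; exact_mod_cast (show 2 * n ≠ v by omega)
  rw [Nat.cast_sub (by omega), Nat.cast_sub (by omega)]
  field_simp
  push_cast
  ring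

theorem tendsto_multichoose_sub_div_multichoose (m b : ℕ) :
    Tendsto (fun n : ℕ => ((n - m).multichoose (n - b) : ℝ) / n.multichoose n) atTop
      (𝓝 (2⁻¹ ^ (m + b))) := by
  induction m with
  | zero =>
    simp only [Nat.sub_zero, zero_add]
    induction b with
    | zero =>
      refine tendsto_const_nhds.congr fun n => ?_
      rw [Nat.sub_zero, pow_zero, div_self (by exact_mod_cast (Nat.multichoose_self_pos n).ne')]
    | succ b ih =>
      rw [pow_succ]
      refine (ih.mul (tendsto_natSub_div_two_mul_natSub b (b + 1))).congr' ?_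
      filter_upwards [eventually_gt_atTop (b + 1)] with n hn
      have hstep := Nat.multichoose_succ_mul_succ n (n - (b + 1))
      rw [show n - (b + 1) + 1 = n - b by omega,
        show n + (n - (b + 1)) = 2 * n - (b + 1) by omega] at hstep
      have hD : (n.multichoose n : ℝ) ≠ 0 := by exact_mod_cast (Nat.multichoose_self_pos n).ne'
      have hM : ((2 * n - (b + 1) : ℕ) : ℝ) ≠ 0 := by
        exact_mod_cast (show 2 * n - (b + 1) ≠ 0 by omega)
      field_simp
      exact_mod_cast hstep.trans (mul_comm _ _)
  | succ m ih =>
    rw [Nat.add_right_comm, pow_succ]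
    refine (ih.mul (tendsto_natSub_div_two_mul_natSub (m + 1) (m + 1 + b))).congr' ?_
    filter_upwards [eventually_gt_atTop (m + b + 1)] with n hn
    have hstep := Nat.multichoose_mul_add (n - (m + 1)) (n - b)
    rw [show n - (m + 1) + 1 = n - m by omega,
      show n - (m + 1) + (n - b) = 2 * n - (m + 1 + b) by omega] at hstep
    have hD : (n.multichoose n : ℝ) ≠ 0 := by exact_mod_cast (Nat.multichoose_self_pos n).ne'
    have hM : ((2 * n - (m + 1 + b) : ℕ) : ℝ) ≠ 0 := by
      exact_mod_cast (show 2 * n - (m + 1 + b) ≠ 0 by omega)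
    field_simp
    exact_mod_cast hstep.symm.trans (mul_comm _ _)

/-- `P(X_1 + ... + X_n = c)` for the step law of the theorem (negative binomial, shifted by `-n`). -/
noncomputable def walkLaw (n : ℕ) (c : ℤ) : ℝ≥0∞ :=
  if -(n : ℤ) ≤ c then (n.multichoose (c + n).toNat : ℝ≥0∞) * 2⁻¹ ^ (c + 2 * n).toNat else 0

theorem walkLaw_of_lt {n : ℕ} {c : ℤ} (h : c < -n) : walkLaw n c = 0 :=
  if_neg (not_le.2 h)

theorem walkLaw_eq {n j : ℕ} {c : ℤ} (h : (j : ℤ) = c + n) :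
    walkLaw n c = n.multichoose j * 2⁻¹ ^ (j + n) := by
  rw [walkLaw, if_pos (by omega), show (c + n).toNat = j by omega,
    show (c + 2 * n).toNat = j + n by omega]

theorem walkLaw_zero (c : ℤ) : walkLaw 0 c = if c = 0 then 1 else 0 := by
  split_ifs with hc
  · rw [walkLaw_eq (j := 0) (by simp [hc])]; simp
  · rcases lt_or_gt_of_ne hc with hc | hc
    · exact walkLaw_of_lt (by simpa using hc)
    · obtain ⟨k, rfl⟩ : ∃ k : ℕ, c = (k + 1 : ℕ) := ⟨c.toNat - 1, by omega⟩
      rw [walkLaw_eq (j := k + 1) (by simp), Nat.multichoose_zero_succ, Nat.cast_zero, zero_mul]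

theorem walkLaw_one (k : ℤ) : walkLaw 1 k = if -1 ≤ k then 2⁻¹ ^ (k + 2).toNat else 0 := by
  simp only [walkLaw, Nat.cast_one, Nat.multichoose_one, one_mul, mul_one]

theorem tsum_walkLaw_one_mul_walkLaw (n : ℕ) (c : ℤ) :
    ∑' k, walkLaw 1 k * walkLaw n (c - k) = walkLaw (n + 1) c := by
  rcases lt_or_ge c (-(n + 1 : ℕ)) with hc | hc
  · rw [walkLaw_of_lt hc, ENNReal.tsum_eq_zero]
    intro k
    rcases lt_or_ge k (-1) with hk | hk
    · rw [walkLaw_of_lt (by simpa using hk), zero_mul]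
    · rw [walkLaw_of_lt (n := n) (c := c - k) (by push_cast at hc; omega), mul_zero]
  obtain ⟨N, hN⟩ : ∃ N : ℕ, (N : ℤ) = c + (n + 1 : ℕ) := ⟨(c + (n + 1 : ℕ)).toNat, by omega⟩
  have hsupp : Function.support (fun k => walkLaw 1 k * walkLaw n (c - k)) ⊆
      Set.range (fun i : ℕ => (i : ℤ) - 1) := by
    intro k hk
    refine ⟨(k + 1).toNat, ?_⟩
    by_contra h
    refine hk ?_
    change walkLaw 1 k * walkLaw n (c - k) = 0
    rw [walkLaw_of_lt (by simp at h; omega), zero_mul]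
  have hterm : ∀ i ∈ range (N + 1), walkLaw 1 (i - 1) * walkLaw n (c - (i - 1)) =
      n.multichoose (N - i) * 2⁻¹ ^ (N + (n + 1)) := by
    intro i hi
    rw [mem_range] at hi
    rw [walkLaw_eq (j := i) (by push_cast; ring), walkLaw_eq (j := N - i) (by omega),
      Nat.multichoose_one, Nat.cast_one, one_mul, mul_left_comm, ← pow_add,
      show i + 1 + (N - i + n) = N + (n + 1) by omega]
  have hreflect := sum_range_reflect (fun i => n.multichoose i) (N + 1)
  simp only [Nat.add_sub_cancel] at hreflect
  have hinj : Function.Injective (fun i : ℕ => (i : ℤ) - 1) := fun i j h => by simpa using h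
  rw [← hinj.tsum_eq hsupp, tsum_eq_sum (s := range (N + 1)) ?_, sum_congr rfl hterm, ← sum_mul,
    ← Nat.cast_sum, hreflect, Nat.sum_range_multichoose_eq_multichoose_succ, walkLaw_eq hN]
  intro i hi
  rw [mem_range, not_lt] at hi
  rw [walkLaw_of_lt (n := n) (by push_cast at hN; omega), mul_zero]

theorem tendsto_walkLaw_sub_div_walkLaw (m : ℕ) {c : ℤ} (hc : c ≤ m) :
    Tendsto (fun n => walkLaw (n - m) c / walkLaw n 0) atTop (𝓝 1) := by
  obtain ⟨b, rfl⟩ : ∃ b : ℕ, c = m - b := ⟨(m - c).toNat, by omega⟩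
  have hlim : Tendsto (fun n : ℕ =>
      ((n - m).multichoose (n - b) : ℝ) / n.multichoose n * 2 ^ (m + b)) atTop (𝓝 1) := by
    have := (tendsto_multichoose_sub_div_multichoose m b).mul_const ((2 : ℝ) ^ (m + b))
    rwa [← mul_pow, inv_mul_cancel₀ two_ne_zero, one_pow] at this
  have hofReal : ∀ k e : ℕ, ENNReal.ofReal (k * 2⁻¹ ^ e) = k * 2⁻¹ ^ e := fun k e => by
    rw [ENNReal.ofReal_mul (by positivity), ENNReal.ofReal_natCast,
      ENNReal.ofReal_pow (by norm_num), ENNReal.ofReal_inv_of_pos (by norm_num),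
      ENNReal.ofReal_ofNat]
  rw [← ENNReal.ofReal_one]
  refine (ENNReal.tendsto_ofReal hlim).congr' ?_
  filter_upwards [eventually_ge_atTop (m + b)] with n hn
  have hD : (0 : ℝ) < n.multichoose n := by exact_mod_cast Nat.multichoose_self_pos n
  rw [walkLaw_eq (j := n - b) (by omega), walkLaw_eq (j := n) (by simp), ← hofReal, ← hofReal,
    ← ENNReal.ofReal_div_of_pos (by positivity)]
  congr 1
  rw [show n + n = n - b + (n - m) + (m + b) by omega, pow_add (2⁻¹ : ℝ) (n - b + (n - m)) (m + b),
    inv_pow 2 (m + b)]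
  field_simp

section

variable {Ω : Type*} [MeasurableSpace Ω] {μ : Measure Ω}

theorem ProbabilityTheory.IndepFun.measure_add_eq_tsum {G : Type*} [AddCommGroup G] [Countable G]
    [MeasurableSpace G] [MeasurableSingletonClass G] {Y Z : Ω → G} (hY : Measurable Y)
    (hZ : Measurable Z) (h : IndepFun Y Z μ) (c : G) :
    μ {ω | Y ω + Z ω = c} = ∑' k, μ {ω | Y ω = k} * μ {ω | Z ω = c - k} := by
  have hset : {ω | Y ω + Z ω = c} = ⋃ k, Y ⁻¹' {k} ∩ Z ⁻¹' {c - k} := by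
    ext ω
    simp [eq_sub_iff_add_eq']
  rw [hset, measure_iUnion]
  · exact tsum_congr fun k =>
      h.measure_inter_preimage_eq_mul _ _ (measurableSet_singleton k) (measurableSet_singleton _)
  · exact fun k l hkl => (((Set.disjoint_singleton.2 hkl).preimage Y).mono
      Set.inter_subset_left Set.inter_subset_left)
  · exact fun k => (hY (measurableSet_singleton k)).inter (hZ (measurableSet_singleton _))

variable {X : ℕ → Ω → ℤ}

theorem measure_prefix_inter_sum_Ico (hmeas : ∀ i, Measurable (X i)) (hindep : iIndepFun X μ)
    {R : ℕ} (a : Fin R → ℤ) (n : ℕ) (c : ℤ) :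
    μ ({ω | ∀ i : Fin R, X i ω = a i} ∩ {ω | ∑ i ∈ Ico R n, X i ω = c}) =
      μ {ω | ∀ i : Fin R, X i ω = a i} * μ {ω | ∑ i ∈ Ico R n, X i ω = c} := by
  have hdisj : Disjoint (range R) (Ico R n) := by
    simp only [disjoint_left, mem_range, mem_Ico]
    omega
  have h := (hindep.indepFun_finset _ _ hdisj hmeas).measure_inter_preimage_eq_mul
    {v | ∀ i : Fin R, v ⟨i, mem_range.2 i.2⟩ = a i} {v | ∑ i, v i = c}
    (Set.to_countable _).measurableSet (Set.to_countable _).measurableSet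
  have hsum : ∀ ω, ∑ i : Ico R n, X i ω = ∑ i ∈ Ico R n, X i ω := fun ω =>
    sum_coe_sort (Ico R n) (X · ω)
  simpa only [Set.preimage_ofPred_eq, hsum] using h

variable [IsProbabilityMeasure μ]

theorem measure_sum_eq_walkLaw (hmeas : ∀ i, Measurable (X i)) (hindep : iIndepFun X μ)
    (hlaw : ∀ i k, μ {ω | X i ω = k} = walkLaw 1 k) (s : Finset ℕ) (c : ℤ) :
    μ {ω | ∑ i ∈ s, X i ω = c} = walkLaw #s c := by
  induction s using Finset.cons_induction generalizing c with
  | empty =>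
    rw [card_empty, walkLaw_zero]
    split_ifs with hc <;> simp [hc, eq_comm]
  | cons j t hj ih =>
    have hindep' := (hindep.indepFun_finsetSum_of_notMem hmeas hj).symm
    rw [sum_fn] at hindep'
    simp only [sum_cons]
    rw [card_cons,
      hindep'.measure_add_eq_tsum (hmeas j) (Finset.measurable_sum t fun i _ => hmeas i),
      ← tsum_walkLaw_one_mul_walkLaw]
    exact tsum_congr fun k => by rw [hlaw, ih]

theorem cond_sum_range_eq_zero_prefix (hmeas : ∀ i, Measurable (X i)) (hindep : iIndepFun X μ)
    (hlaw : ∀ i k, μ {ω | X i ω = k} = walkLaw 1 k) {R n : ℕ} (a : Fin R → ℤ) (hRn : R ≤ n) :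
    μ[|{ω | ∑ i ∈ range n, X i ω = 0}] {ω | ∀ i : Fin R, X i ω = a i} =
      μ {ω | ∀ i : Fin R, X i ω = a i} * (walkLaw (n - R) (-∑ i, a i) / walkLaw n 0) := by
  have hset : {ω | ∑ i ∈ range n, X i ω = 0} ∩ {ω | ∀ i : Fin R, X i ω = a i} =
      {ω | ∀ i : Fin R, X i ω = a i} ∩ {ω | ∑ i ∈ Ico R n, X i ω = -∑ i, a i} := by
    ext ω
    simp only [Set.mem_inter_iff, Set.mem_ofPred_eq, ← sum_range_add_sum_Ico _ hRn]
    refine and_comm.trans (and_congr_right fun hprefix => ?_)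
    rw [← Fin.sum_univ_eq_sum_range (fun i => X i ω), sum_congr rfl fun i _ => hprefix i, add_comm,
      ← eq_neg_iff_add_eq_zero]
  have hzero : MeasurableSet {ω | ∑ i ∈ range n, X i ω = 0} :=
    (Finset.measurable_sum _ fun i _ => hmeas i) (measurableSet_singleton 0)
  rw [cond_apply hzero, hset,
    measure_prefix_inter_sum_Ico hmeas hindep, measure_sum_eq_walkLaw hmeas hindep hlaw,
    measure_sum_eq_walkLaw hmeas hindep hlaw, card_range, Nat.card_Ico, div_eq_mul_inv]
  ring

end

theorem bridge_conditioned_convergence_general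
    {Ω : Type*} [MeasurableSpace Ω] (μ : Measure Ω) [IsProbabilityMeasure μ]
    (X : ℕ → Ω → ℤ)
    (hmeas : ∀ i, Measurable (X i))
    (hindep : iIndepFun X μ)
    (hlaw : ∀ i, ∀ k : ℤ,
      μ {ω | X i ω = k} = if -1 ≤ k then (2 : ℝ≥0∞)⁻¹ ^ (k + 2).toNat else 0)
    (R : ℕ) (a : Fin R → ℤ) (ha : ∀ i, -1 ≤ a i) :
    Tendsto
      (fun n => (μ[|{ω | ∑ i ∈ Finset.range n, X i ω = 0}])
        {ω | ∀ i : Fin R, X (i : ℕ) ω = a i})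
      atTop (nhds (μ {ω | ∀ i : Fin R, X (i : ℕ) ω = a i})) := by
  have hlaw' : ∀ i k, μ {ω | X i ω = k} = walkLaw 1 k := fun i k =>
    (hlaw i k).trans (walkLaw_one k).symm
  have hsum_le : -∑ i, a i ≤ R := by
    have := sum_le_sum fun i (_ : i ∈ univ) => ha i
    simp only [sum_const, card_univ, Fintype.card_fin, nsmul_eq_mul, mul_neg, mul_one] at this
    omega
  have hlim := ENNReal.Tendsto.const_mul (tendsto_walkLaw_sub_div_walkLaw R hsum_le)
    (Or.inl one_ne_zero) (a := μ {ω | ∀ i : Fin R, X i ω = a i})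
  rw [mul_one] at hlim
  refine hlim.congr' ?_
  filter_upwards [eventually_ge_atTop R] with n hn
  exact (cond_sum_range_eq_zero_prefix hmeas hindep hlaw' a hn).symm

/-- Let `X_1, X_2, ...` be i.i.d. with `P(X_j = k) = 2^{-k-2}` for integers `k ≥ -1`.
For every fixed `R ≥ 1` and all `a_1,...,a_R ∈ {-1,0,1,...}`, the conditional probability
`P(X_1 = a_1, ..., X_R = a_R | X_1 + ... + X_n = 0)` converges, as `n → ∞`, to
`P(X_1 = a_1, ..., X_R = a_R)`. -/
theorem bridge_conditioned_convergence
    {Ω : Type*} [MeasurableSpace Ω] (μ : Measure Ω) [IsProbabilityMeasure μ]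
    (X : ℕ → Ω → ℤ)
    (hmeas : ∀ i, Measurable (X i))
    (hindep : iIndepFun X μ)
    (hlaw : ∀ i, ∀ k : ℤ,
      μ {ω | X i ω = k} = if -1 ≤ k then (2 : ℝ≥0∞)⁻¹ ^ (k + 2).toNat else 0)
    (R : ℕ) (hR : 1 ≤ R) (a : Fin R → ℤ) (ha : ∀ i, -1 ≤ a i) :
    Tendsto
      (fun n => (μ[|{ω | ∑ i ∈ Finset.range n, X i ω = 0}])
        {ω | ∀ i : Fin R, X (i : ℕ) ω = a i})
      atTop (nhds (μ {ω | ∀ i : Fin R, X (i : ℕ) ω = a i})) :=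
  bridge_conditioned_convergence_general μ X hmeas hindep hlaw R a ha
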